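/- arXiv:2406.03306 — 6 statements merged into one kernel-verified Lean document; each statement's English description precedes it below -/
import Mathlib

section
/- Let q be a natural number, let a ∈ [-1,1] and u ∈ ℝ satisfy |a − u| ≤ 2^{−q}, and let g ∈ ℝ satisfy |g − 2^q·(a − u)/π| ≤ 1/(2π). Define the updated estimate u' := max(−1, min(1, u + π·2^{−q}·g)) (i.e., u + π·2^{−q}·g truncated to [−1,1]). Then |a − u'| ≤ 2^{−(q+1)}. -/
open Set

theorem abs_sub_max_min_le_of_mem_Icc {α : Type*} [AddCommGroup α] [LinearOrder α]
    [IsOrderedAddMonoid α] {lo hi a : α} (ha : a ∈ Icc lo hi) (v : α) :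
    |a - max lo (min hi v)| ≤ |a - v| :=
  calc |a - max lo (min hi v)| = |max (min hi a) lo - max (min hi v) lo| := by
        rw [min_eq_right ha.2, max_eq_left ha.1, max_comm]
    _ ≤ |min hi a - min hi v| := abs_max_sub_max_le_abs _ _ _
    _ ≤ |a - v| := by simpa using abs_min_sub_min_le_max hi a hi v

theorem abs_sub_add_mul_le {a u g c ε : ℝ} (hc : 0 < c) (hg : |g - (a - u) / c| ≤ ε) :
    |a - (u + c * g)| ≤ c * ε := by
  have hresidual : a - (u + c * g) = -(c * (g - (a - u) / c)) := by
    field_simp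
    ring
  rw [hresidual, abs_neg, abs_mul, abs_of_pos hc]
  gcongr

theorem adaptive_update_step_general (q : ℕ) (a u g : ℝ)
    (ha : a ∈ Set.Icc (-1 : ℝ) 1)
    (hg : |g - 2 ^ q * (a - u) / Real.pi| ≤ 1 / (2 * Real.pi)) :
    |a - max (-1) (min 1 (u + Real.pi * (2 : ℝ) ^ (-(q : ℤ)) * g))| ≤
      (2 : ℝ) ^ (-((q : ℤ) + 1)) := by
  have hc : 0 < Real.pi * (2 : ℝ) ^ (-(q : ℤ)) := by positivity
  have hscale : 2 ^ q * (a - u) / Real.pi = (a - u) / (Real.pi * (2 : ℝ) ^ (-(q : ℤ))) := by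
    rw [zpow_neg, zpow_natCast]
    field_simp
  have hbound : Real.pi * (2 : ℝ) ^ (-(q : ℤ)) * (1 / (2 * Real.pi)) = 2 ^ (-((q : ℤ) + 1)) := by
    rw [neg_add, zpow_add₀ two_ne_zero]
    field_simp
  rw [hscale] at hg
  calc _ ≤ |a - (u + Real.pi * (2 : ℝ) ^ (-(q : ℤ)) * g)| := abs_sub_max_min_le_of_mem_Icc ha _
    _ ≤ _ := by rw [← hbound]; exact abs_sub_add_mul_le hc hg

/-- Correctness of one update step of the adaptive gradient-estimation algorithm:
if the temporal estimate `u` satisfies `|a - u| ≤ 2^(-q)` and the gradient-estimation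
output `g` satisfies `|g - 2^q (a - u)/π| ≤ 1/(2π)`, then the truncated updated estimate
`u' = max (-1) (min 1 (u + π 2^(-q) g))` satisfies `|a - u'| ≤ 2^(-(q+1))`. -/
theorem adaptive_update_step (q : ℕ) (a u g : ℝ)
    (ha : a ∈ Set.Icc (-1 : ℝ) 1)
    (hau : |a - u| ≤ (2 : ℝ) ^ (-(q : ℤ)))
    (hg : |g - 2 ^ q * (a - u) / Real.pi| ≤ 1 / (2 * Real.pi)) :
    |a - max (-1) (min 1 (u + Real.pi * (2 : ℝ) ^ (-(q : ℤ)) * g))| ≤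
      (2 : ℝ) ^ (-((q : ℤ) + 1)) :=
  adaptive_update_step_general q a u g ha hg
end

section
/- Let ε ∈ (0,1), let Q := ⌈log₂(1/ε)⌉, and let c ∈ (0, 3/(8(1+π)²)]. Then 2^{−2(Q+1)} + (1+π)² · Σ_{q=0}^{Q} (c/8^{Q−q}) · 4^{−q} ≤ ε². -/
/-! Write `η = 2^(-Q)`, so that `η ≤ ε` by the choice of `Q`. The all-success term is `η²/4`.
Factoring out `4^(-Q) = η²` and reversing the order of summation turns the failure sum into
`c · Σ_{k ≤ Q} 2^(-k) ≤ 2c`, so it is at most `2cη²`. The constraint on `c` makes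
`(1+π)² · 2cη² ≤ 3η²/4`, and the total is at most `η² ≤ ε²`. -/

open Finset

lemma le_pow_natCeil_logb {b x : ℝ} (hb : 1 < b) (hx : 0 < x) : x ≤ b ^ ⌈Real.logb b x⌉₊ := by
  calc x = b ^ Real.logb b x := (Real.rpow_logb (by linarith) hb.ne' hx).symm
    _ ≤ b ^ (⌈Real.logb b x⌉₊ : ℝ) := Real.rpow_le_rpow_of_exponent_le hb.le (Nat.le_ceil _)
    _ = b ^ ⌈Real.logb b x⌉₊ := Real.rpow_natCast b _

lemma inv_two_pow_natCeil_logb_inv_le {ε : ℝ} (hε : 0 < ε) :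
    ((2 : ℝ) ^ ⌈Real.logb 2 (1 / ε)⌉₊)⁻¹ ≤ ε := by
  have h := le_pow_natCeil_logb one_lt_two (one_div_pos.mpr hε)
  rw [one_div] at h ⊢
  rwa [inv_le_comm₀ hε (by positivity)] at h

lemma sum_range_inv_pow_mul_inv_pow {a b : ℝ} (ha : a ≠ 0) (hb : b ≠ 0) (Q : ℕ) :
    ∑ q ∈ range (Q + 1), (a ^ (Q - q))⁻¹ * (b ^ q)⁻¹ =
      (b ^ Q)⁻¹ * ∑ k ∈ range (Q + 1), (b / a) ^ k := by
  rw [← sum_range_reflect, mul_sum]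
  refine sum_congr rfl fun k hk => ?_
  have hkQ : k ≤ Q := Nat.lt_succ_iff.mp (mem_range.mp hk)
  rw [Nat.add_sub_cancel, Nat.sub_sub_self hkQ, div_pow,
    ← Nat.sub_add_cancel hkQ, pow_add, Nat.add_sub_cancel]
  field_simp

lemma sum_range_inv_eight_pow_mul_inv_four_pow_le (Q : ℕ) :
    ∑ q ∈ range (Q + 1), ((8 : ℝ) ^ (Q - q))⁻¹ * ((4 : ℝ) ^ q)⁻¹ ≤ 2 * ((2 : ℝ) ^ Q)⁻¹ ^ 2 := by
  have h4 : ((4 : ℝ) ^ Q)⁻¹ = ((2 : ℝ) ^ Q)⁻¹ ^ 2 := by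
    rw [inv_pow, ← pow_mul, mul_comm Q 2, pow_mul]
    norm_num
  rw [sum_range_inv_pow_mul_inv_pow (by norm_num) (by norm_num), h4, mul_comm 2]
  gcongr
  rw [range_eq_Ico]
  calc ∑ k ∈ Ico 0 (Q + 1), ((4 : ℝ) / 8) ^ k ≤ ((4 : ℝ) / 8) ^ 0 / (1 - 4 / 8) :=
        geom_sum_Ico_le_of_lt_one (by norm_num) (by norm_num)
    _ = 2 := by norm_num

/-- The mean-squared-error budget of Theorem 2: with `Q = ⌈log₂(1/ε)⌉` iterations,
failure probabilities `δ^(q) = c/8^(Q-q)`, all-success squared error `2^(-2(Q+1))`,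
and first-failure-at-`q` squared error `(1+π)² 4^(-q)`, the total MSE is at most `ε²`. -/
theorem mse_budget (ε c : ℝ) (hε : ε ∈ Set.Ioo (0 : ℝ) 1)
    (hc : c ∈ Set.Ioc (0 : ℝ) (3 / (8 * (1 + Real.pi) ^ 2))) :
    (2 : ℝ) ^ (-(2 * ((⌈Real.logb 2 (1 / ε)⌉₊ : ℤ) + 1))) +
      (1 + Real.pi) ^ 2 *
        ∑ q ∈ Finset.range (⌈Real.logb 2 (1 / ε)⌉₊ + 1),
          (c / (8 : ℝ) ^ (⌈Real.logb 2 (1 / ε)⌉₊ - q)) * (4 : ℝ) ^ (-(q : ℤ)) ≤ ε ^ 2 := by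
  set Q := ⌈Real.logb 2 (1 / ε)⌉₊
  set η := ((2 : ℝ) ^ Q)⁻¹
  have hηε : η ≤ ε := inv_two_pow_natCeil_logb_inv_le hε.1
  have hsuccess : (2 : ℝ) ^ (-(2 * ((Q : ℤ) + 1))) = η ^ 2 / 4 := by
    rw [show -(2 * ((Q : ℤ) + 1)) = -((2 * Q + 2 : ℕ) : ℤ) by push_cast; ring,
      zpow_neg, zpow_natCast, pow_add, pow_mul']
    simp only [η, inv_pow, mul_inv]
    norm_num [div_eq_mul_inv]
  have hfailure : ∑ q ∈ range (Q + 1), c / (8 : ℝ) ^ (Q - q) * (4 : ℝ) ^ (-(q : ℤ)) ≤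
      2 * c * η ^ 2 := by
    simp only [div_eq_mul_inv, zpow_neg, zpow_natCast, mul_assoc, ← mul_sum]
    have := mul_le_mul_of_nonneg_left (sum_range_inv_eight_pow_mul_inv_four_pow_le Q) hc.1.le
    linarith
  have hc' : (1 + Real.pi) ^ 2 * c ≤ 3 / 8 := by
    have := (le_div_iff₀ (by positivity)).mp hc.2
    linarith
  rw [hsuccess]
  calc η ^ 2 / 4 + (1 + Real.pi) ^ 2 * ∑ q ∈ range (Q + 1), c / 8 ^ (Q - q) * 4 ^ (-(q : ℤ))
      ≤ η ^ 2 / 4 + (1 + Real.pi) ^ 2 * (2 * c * η ^ 2) := by gcongr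
    _ = η ^ 2 / 4 + 2 * ((1 + Real.pi) ^ 2 * c) * η ^ 2 := by ring
    _ ≤ η ^ 2 / 4 + 2 * (3 / 8) * η ^ 2 := by gcongr
    _ = η ^ 2 := by ring
    _ ≤ ε ^ 2 := by gcongr
end

section
/- For every real number x with |x| ≤ 1/4, one has |arccos(x) − π/2 + x| ≤ |x|³/5. -/
/-!
Since `arccos x = π/2 - arcsin x` and `arcsin` is odd, it suffices to show
`x ≤ arcsin x ≤ x + x³/5` for `0 ≤ x ≤ 1/4`. The lower bound is `sin y ≤ y` at `y = arcsin x`.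
For the upper bound, `t + t³/5 - arcsin t` vanishes at `0` and is nondecreasing on `[0, 1/4]`,
because there `1/√(1 - t²) ≤ 1 + 3t²/5`.
-/

open Real Set

theorem one_div_sqrt_one_sub_sq_le {t : ℝ} (ht : t ^ 2 ≤ 1 / 16) :
    1 / √(1 - t ^ 2) ≤ 1 + 3 * t ^ 2 / 5 := by
  have hpos : 0 < 1 + 3 * t ^ 2 / 5 := by positivity
  rw [one_div_le (sqrt_pos.2 (by linarith)) hpos]
  apply le_sqrt_of_sq_le
  rw [div_pow, div_le_iff₀ (by positivity)]
  -- `(1 - u) (1 + 3u/5)² - 1 = u (5 - 21u - 9u²) / 25` with `u = t²`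
  have hquad : 0 ≤ 5 - 21 * t ^ 2 - 9 * (t ^ 2) ^ 2 := by nlinarith [sq_nonneg t]
  nlinarith [mul_nonneg (sq_nonneg t) hquad]

theorem arcsin_le_add_cube_div_five {x : ℝ} (hx₀ : 0 ≤ x) (hx : x ≤ 1 / 4) :
    arcsin x ≤ x + x ^ 3 / 5 := by
  have hmono : MonotoneOn (fun t => t + t ^ 3 / 5 - arcsin t) (Icc 0 (1 / 4)) := by
    refine monotoneOn_of_hasDerivWithinAt_nonneg
      (f' := fun t => 1 + 3 * t ^ 2 / 5 - 1 / √(1 - t ^ 2)) (convex_Icc _ _)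
      (by fun_prop) (fun t ht => ?_) (fun t ht => ?_) <;>
      rw [interior_Icc] at ht <;> obtain ⟨ht₀, ht₁⟩ := ht
    · have hderiv : HasDerivAt (fun t => t + t ^ 3 / 5 - arcsin t)
          (1 + 3 * t ^ 2 / 5 - 1 / √(1 - t ^ 2)) t :=
        (((hasDerivAt_id' t).add ((hasDerivAt_pow 3 t).div_const 5)).sub
          (hasDerivAt_arcsin (by linarith) (by linarith))).congr_deriv (by norm_num)
      exact hderiv.hasDerivWithinAt
    · linarith [one_div_sqrt_one_sub_sq_le (t := t) (by nlinarith)]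
  simpa using hmono ⟨le_rfl, by norm_num⟩ ⟨hx₀, hx⟩ hx₀

theorem self_le_arcsin {x : ℝ} (hx₀ : 0 ≤ x) (hx₁ : x ≤ 1) : x ≤ arcsin x := by
  simpa [sin_arcsin (by linarith) hx₁] using sin_le (arcsin_nonneg.2 hx₀)

theorem abs_arcsin_sub_self_le {x : ℝ} (hx : |x| ≤ 1 / 4) : |arcsin x - x| ≤ |x| ^ 3 / 5 := by
  wlog hx₀ : 0 ≤ x generalizing x
  · have h := this (x := -x) (by rwa [abs_neg]) (by linarith)
    rwa [arcsin_neg, abs_neg, ← abs_neg, show -(-arcsin x - -x) = arcsin x - x by ring] at h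
  rw [abs_of_nonneg hx₀] at hx ⊢
  rw [abs_of_nonneg (sub_nonneg.2 (self_le_arcsin hx₀ (by linarith)))]
  linarith [arcsin_le_add_cube_div_five hx₀ hx]

/-- Cubic bound on the non-linearity of `arccos`: for `|x| ≤ 1/4`,
`|arccos x - π/2 + x| ≤ |x|³/5`. -/
theorem arccos_linear_approx (x : ℝ) (hx : |x| ≤ 1 / 4) :
    |Real.arccos x - Real.pi / 2 + x| ≤ |x| ^ 3 / 5 := by
  rw [arccos_eq_pi_div_two_sub_arcsin, show π / 2 - arcsin x - π / 2 + x = -(arcsin x - x) by ring,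
    abs_neg]
  exact abs_arcsin_sub_self_le hx
end

section
/- For a positive integer p, let G_p denote the grid {μ/2^p − 1/2 + 1/2^{p+1} : μ ∈ {0,1,…,2^p−1}} ⊂ ℝ. Let p, M be positive integers, δ' ∈ (0,1), and let w_1,…,w_{M+1} be real numbers, not all zero. Then the number of tuples (x_1,…,x_M,y) ∈ G_p^M × G_1 satisfying |Σ_{j=1}^{M} w_j x_j + w_{M+1}·y| < √((ln(2/δ')/2) · Σ_{j=1}^{M+1} w_j²) is at least (1−δ')·2^{pM+1}. -/
/-- The grid `G_p = {μ/2^p - 1/2 + 1/2^(p+1) : μ ∈ {0,…,2^p-1}} ⊂ ℝ`. -/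
def gridG (p : ℕ) : Set ℝ :=
  {x | ∃ μ : ℕ, μ < 2 ^ p ∧ x = (μ : ℝ) / 2 ^ p - 1 / 2 + 1 / 2 ^ (p + 1)}

/-!
Summing `exp (u S)` over the product of grids, where `S = ∑ wⱼ xⱼ`, factorises into
one-dimensional sums. Each grid is centred and lies in `[-1/2, 1/2]`, so convexity of `exp`
bounds the one-dimensional sum by `|G| exp (u² wⱼ² / 8)` (Hoeffding's lemma). Markov's inequality
with the optimal `u` then leaves at most `exp (-2 t² / ∑ wⱼ²)` of all tuples with `S ≥ t`, and as
many with `S ≤ -t`; for `t² = ln (2/δ') ∑ wⱼ² / 2` each tail is a `δ'/2` fraction.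
-/

open Finset Fintype Real

noncomputable def gridPoint (p μ : ℕ) : ℝ := (2 * μ + 1 - 2 ^ p) / 2 ^ (p + 1)

lemma gridPoint_eq (p μ : ℕ) :
    gridPoint p μ = (μ : ℝ) / 2 ^ p - 1 / 2 + 1 / 2 ^ (p + 1) := by
  rw [gridPoint]
  field_simp
  ring

lemma gridPoint_injective (p : ℕ) : Function.Injective (gridPoint p) := by
  intro a b h
  rw [gridPoint, gridPoint, div_left_inj' (by positivity)] at h
  exact_mod_cast (by linarith : (a : ℝ) = b)

noncomputable def gridFinset (p : ℕ) : Finset ℝ := (range (2 ^ p)).image (gridPoint p)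

lemma coe_gridFinset (p : ℕ) : (gridFinset p : Set ℝ) = gridG p := by
  ext x
  simp [gridFinset, gridG, gridPoint_eq, eq_comm]

lemma card_gridFinset (p : ℕ) : #(gridFinset p) = 2 ^ p := by
  rw [gridFinset, card_image_of_injective _ (gridPoint_injective p), card_range]

lemma sum_range_two_mul_add_one (n : ℕ) : ∑ i ∈ range n, (2 * i + 1 : ℝ) = n ^ 2 := by
  induction n with
  | zero => simp
  | succ n ih => rw [sum_range_succ, ih]; push_cast; ring

lemma sum_gridFinset (p : ℕ) : ∑ x ∈ gridFinset p, x = 0 := by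
  rw [gridFinset, sum_image fun a _ b _ h => gridPoint_injective p h]
  simp only [gridPoint, ← sum_div, sum_sub_distrib, sum_range_two_mul_add_one, sum_const,
    card_range, nsmul_eq_mul]
  push_cast
  ring

lemma abs_le_of_mem_gridFinset {p : ℕ} {x : ℝ} (hx : x ∈ gridFinset p) : |x| ≤ 1 / 2 := by
  obtain ⟨μ, hμ, rfl⟩ := mem_image.mp hx
  have hμ' : (μ : ℝ) + 1 ≤ 2 ^ p := by exact_mod_cast mem_range.mp hμ
  rw [gridPoint, abs_div, abs_of_pos (by positivity : (0 : ℝ) < 2 ^ (p + 1)),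
    div_le_iff₀ (by positivity), abs_le, pow_succ]
  constructor <;> nlinarith [(Nat.cast_nonneg μ : (0 : ℝ) ≤ μ)]

lemma exp_mul_le_cosh_add_div_mul_sinh {c x : ℝ} (hc : 0 < c) (hx : |x| ≤ c) (u : ℝ) :
    exp (u * x) ≤ cosh (u * c) + x / c * sinh (u * c) := by
  obtain ⟨hlo, hhi⟩ := abs_le.mp hx
  have hconv := convexOn_exp.2 (Set.mem_univ (-(u * c))) (Set.mem_univ (u * c))
    (div_nonneg (by linarith : 0 ≤ c - x) (by positivity : 0 ≤ 2 * c))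
    (div_nonneg (by linarith : 0 ≤ c + x) (by positivity : 0 ≤ 2 * c))
    (by field_simp; ring)
  rw [smul_eq_mul, smul_eq_mul, smul_eq_mul, smul_eq_mul] at hconv
  have hcomb : (c - x) / (2 * c) * -(u * c) + (c + x) / (2 * c) * (u * c) = u * x := by
    field_simp; ring
  rw [hcomb] at hconv
  refine hconv.trans_eq ?_
  rw [cosh_eq, sinh_eq]
  field_simp
  ring

/-- Hoeffding's lemma for the uniform distribution on a finite centred set. -/
theorem sum_exp_mul_le_of_sum_eq_zero {s : Finset ℝ} {c : ℝ} (hc : 0 < c)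
    (hs : ∑ x ∈ s, x = 0) (hsc : ∀ x ∈ s, |x| ≤ c) (u : ℝ) :
    ∑ x ∈ s, exp (u * x) ≤ #s * exp ((u * c) ^ 2 / 2) :=
  calc ∑ x ∈ s, exp (u * x) ≤ ∑ x ∈ s, (cosh (u * c) + x / c * sinh (u * c)) :=
        sum_le_sum fun x hx => exp_mul_le_cosh_add_div_mul_sinh hc (hsc x hx) u
    _ = #s * cosh (u * c) := by
        rw [sum_add_distrib, ← sum_mul, ← sum_div, hs, sum_const, nsmul_eq_mul]; ring
    _ ≤ #s * exp ((u * c) ^ 2 / 2) := by gcongr; exact cosh_le_exp_half_sq _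

section Hoeffding

variable {ι : Type*} [Fintype ι] [DecidableEq ι] {s : ι → Finset ℝ} {c : ℝ}

lemma sum_piFinset_exp_sum (s : ι → Finset ℝ) (f : ι → ℝ → ℝ) :
    ∑ x ∈ piFinset s, exp (∑ i, f i (x i)) = ∏ i, ∑ y ∈ s i, exp (f i y) := by
  simp_rw [Real.exp_sum]
  exact (prod_univ_sum s fun i y => exp (f i y)).symm

lemma sum_piFinset_exp_mul_sum_le (hc : 0 < c) (hs : ∀ i, ∑ x ∈ s i, x = 0)
    (hsc : ∀ i, ∀ x ∈ s i, |x| ≤ c) (v : ι → ℝ) (u : ℝ) :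
    ∑ x ∈ piFinset s, exp (u * ∑ i, v i * x i) ≤
      #(piFinset s) * exp (u ^ 2 * c ^ 2 * (∑ i, v i ^ 2) / 2) := by
  have hlin : ∀ x : ι → ℝ, u * ∑ i, v i * x i = ∑ i, u * v i * x i := fun x => by
    simp only [mul_sum, mul_assoc]
  have hquad : u ^ 2 * c ^ 2 * (∑ i, v i ^ 2) / 2 = ∑ i, (u * v i * c) ^ 2 / 2 := by
    rw [mul_sum, sum_div]
    exact sum_congr rfl fun i _ => by ring
  simp_rw [hlin]
  rw [hquad, sum_piFinset_exp_sum s fun i y => u * v i * y, card_piFinset, Nat.cast_prod,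
    Real.exp_sum, ← prod_mul_distrib]
  gcongr with i
  exact sum_exp_mul_le_of_sum_eq_zero hc (hs i) (hsc i) (u * v i)

lemma card_filter_le_sum_mul_le (hc : 0 < c) (hs : ∀ i, ∑ x ∈ s i, x = 0)
    (hsc : ∀ i, ∀ x ∈ s i, |x| ≤ c) (v : ι → ℝ) {t : ℝ} (ht : 0 ≤ t) :
    (#{x ∈ piFinset s | t ≤ ∑ i, v i * x i} : ℝ) ≤
      #(piFinset s) * exp (-(t ^ 2 / (2 * c ^ 2 * ∑ i, v i ^ 2))) := by
  set V := ∑ i, v i ^ 2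
  set S := fun x : ι → ℝ => ∑ i, v i * x i
  -- the Chernoff parameter minimising `u² c² V / 2 - u t`
  set u := t / (c ^ 2 * V)
  have hu : 0 ≤ u := by positivity
  have hexp : u ^ 2 * c ^ 2 * V / 2 - u * t = -(t ^ 2 / (2 * c ^ 2 * V)) := by
    rcases (sum_nonneg fun i _ => sq_nonneg (v i) : 0 ≤ V).eq_or_lt' with hV | hV
    · simp [u, show V = 0 from hV]
    · simp only [u]; field_simp; ring
  have markov : #{x ∈ piFinset s | t ≤ S x} * exp (u * t) ≤
      ∑ x ∈ piFinset s, exp (u * S x) := by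
    rw [← nsmul_eq_mul]
    refine (card_nsmul_le_sum _ _ _ fun x hx => ?_).trans
      (sum_le_sum_of_subset_of_nonneg (filter_subset _ _) fun _ _ _ => (exp_pos _).le)
    exact exp_le_exp.mpr (mul_le_mul_of_nonneg_left (mem_filter.mp hx).2 hu)
  rw [← hexp, sub_eq_add_neg, exp_add, exp_neg, ← mul_assoc, ← div_eq_mul_inv,
    le_div_iff₀ (exp_pos _)]
  exact markov.trans (sum_piFinset_exp_mul_sum_le hc hs hsc v u)

/-- Two-sided Hoeffding inequality, in counting form. -/
theorem le_card_filter_abs_sum_mul_lt (hc : 0 < c) (hs : ∀ i, ∑ x ∈ s i, x = 0)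
    (hsc : ∀ i, ∀ x ∈ s i, |x| ≤ c) (v : ι → ℝ) {t : ℝ} (ht : 0 ≤ t) :
    (1 - 2 * exp (-(t ^ 2 / (2 * c ^ 2 * ∑ i, v i ^ 2)))) * #(piFinset s) ≤
      #{x ∈ piFinset s | |∑ i, v i * x i| < t} := by
  have hbad : {x ∈ piFinset s | ¬ |∑ i, v i * x i| < t} ⊆
      {x ∈ piFinset s | t ≤ ∑ i, v i * x i} ∪
        {x ∈ piFinset s | t ≤ ∑ i, -v i * x i} := by
    intro x hx
    simp only [mem_filter, not_lt, le_abs', neg_mul, sum_neg_distrib, mem_union] at hx ⊢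
    rcases hx with ⟨hx, h | h⟩
    · exact Or.inr ⟨hx, by linarith⟩
    · exact Or.inl ⟨hx, h⟩
  have hupper := card_filter_le_sum_mul_le hc hs hsc v ht
  have hlower := card_filter_le_sum_mul_le hc hs hsc (fun i => -v i) ht
  simp only [neg_sq] at hlower
  have hsplit := card_filter_add_card_filter_not (s := piFinset s) (fun x => |∑ i, v i * x i| < t)
  have hunion := (card_le_card hbad).trans (card_union_le _ _)
  have hcount : (#(piFinset s) : ℝ) ≤ #{x ∈ piFinset s | |∑ i, v i * x i| < t} +
      (#{x ∈ piFinset s | t ≤ ∑ i, v i * x i} +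
        #{x ∈ piFinset s | t ≤ ∑ i, -v i * x i}) := by
    exact_mod_cast hsplit.ge.trans (Nat.add_le_add_left hunion _)
  linarith

end Hoeffding

noncomputable def gridTuple (p q M : ℕ) : Fin (M + 1) → Finset ℝ :=
  Fin.snoc (fun _ => gridFinset p) (gridFinset q)

lemma exists_gridTuple_eq (p q M : ℕ) (i : Fin (M + 1)) :
    ∃ r, gridTuple p q M i = gridFinset r :=
  i.lastCases ⟨q, Fin.snoc_last _ _⟩ fun _ => ⟨p, Fin.snoc_castSucc _ _ _⟩

lemma sum_gridTuple (p q M : ℕ) (i : Fin (M + 1)) : ∑ x ∈ gridTuple p q M i, x = 0 := by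
  obtain ⟨r, hr⟩ := exists_gridTuple_eq p q M i
  rw [hr, sum_gridFinset]

lemma abs_le_of_mem_gridTuple {p q M : ℕ} {i : Fin (M + 1)} {x : ℝ}
    (hx : x ∈ gridTuple p q M i) : |x| ≤ 1 / 2 := by
  obtain ⟨r, hr⟩ := exists_gridTuple_eq p q M i
  exact abs_le_of_mem_gridFinset (hr ▸ hx)

lemma card_piFinset_gridTuple (p q M : ℕ) : #(piFinset (gridTuple p q M)) = 2 ^ (p * M + q) := by
  simp [gridTuple, card_piFinset, Fin.prod_univ_castSucc, card_gridFinset, pow_mul, pow_add]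

lemma ncard_gridG_eq_card_filter_piFinset_gridTuple (p q M : ℕ) (P : ℝ → Prop)
    [DecidablePred P] (w : Fin (M + 1) → ℝ) :
    { xy : (Fin M → ℝ) × ℝ | (∀ j, xy.1 j ∈ gridG p) ∧ xy.2 ∈ gridG q ∧
        P ((∑ j : Fin M, w j.castSucc * xy.1 j) + w (Fin.last M) * xy.2) }.ncard =
      #{x ∈ piFinset (gridTuple p q M) | P (∑ j, w j * x j)} := by
  let e : (Fin M → ℝ) × ℝ ≃ (Fin (M + 1) → ℝ) :=
    (Equiv.prodComm _ _).trans (Fin.snocEquiv fun _ => ℝ)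
  rw [← Set.ncard_coe_finset, ← Set.ncard_preimage_of_injective_subset_range e.injective
    (by simp)]
  congr 1
  ext ⟨x, y⟩
  simp [e, gridTuple, Fin.sum_univ_castSucc, Fin.forall_fin_succ', ← coe_gridFinset, and_assoc]

theorem hoeffding_grid_count_general (p M : ℕ)
    (δ' : ℝ) (hδ' : δ' ∈ Set.Ioo (0 : ℝ) 1)
    (w : Fin (M + 1) → ℝ) (hw : w ≠ 0) :
    (1 - δ') * 2 ^ (p * M + 1) ≤
      ({ xy : (Fin M → ℝ) × ℝ |
          (∀ j, xy.1 j ∈ gridG p) ∧ xy.2 ∈ gridG 1 ∧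
          |(∑ j : Fin M, w j.castSucc * xy.1 j) + w (Fin.last M) * xy.2| <
            Real.sqrt ((Real.log (2 / δ') / 2) * ∑ j : Fin (M + 1), (w j) ^ 2) }.ncard : ℝ) := by
  obtain ⟨hδ0, hδ1⟩ := hδ'
  set V := ∑ j, w j ^ 2
  have hV : 0 < V := by
    obtain ⟨j, hj⟩ := Function.ne_iff.mp hw
    exact sum_pos' (fun i _ => sq_nonneg _) ⟨j, mem_univ j, sq_pos_of_ne_zero hj⟩
  set t := sqrt (log (2 / δ') / 2 * V)
  have htail : exp (-(t ^ 2 / (2 * (1 / 2) ^ 2 * V))) = δ' / 2 := by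
    have hlog : 0 ≤ log (2 / δ') := log_nonneg (by rw [le_div_iff₀ hδ0]; linarith)
    rw [sq_sqrt (by positivity), show log (2 / δ') / 2 * V / (2 * (1 / 2) ^ 2 * V) = log (2 / δ')
      by field_simp, exp_neg, exp_log (by positivity), inv_div]
  have hcount := le_card_filter_abs_sum_mul_lt (c := 1 / 2) (t := t) (by norm_num)
    (sum_gridTuple p 1 M) (fun _ _ => abs_le_of_mem_gridTuple) w (sqrt_nonneg _)
  rw [htail, card_piFinset_gridTuple, mul_div_cancel₀ _ two_ne_zero] at hcount
  rw [ncard_gridG_eq_card_filter_piFinset_gridTuple p 1 M (fun z => |z| < t)]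
  exact_mod_cast hcount

/-- Hoeffding-type cardinality bound (Lemma 14): for weights `w_1,…,w_{M+1}` not all
zero, the number of tuples `(x, y) ∈ G_p^M × G_1` with
`|Σ_j w_j x_j + w_{M+1} y| < √((ln(2/δ')/2) Σ_j w_j²)` is at least `(1-δ') 2^(pM+1)`. -/
theorem hoeffding_grid_count (p M : ℕ) (hp : 0 < p) (hM : 0 < M)
    (δ' : ℝ) (hδ' : δ' ∈ Set.Ioo (0 : ℝ) 1)
    (w : Fin (M + 1) → ℝ) (hw : w ≠ 0) :
    (1 - δ') * 2 ^ (p * M + 1) ≤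
      ({ xy : (Fin M → ℝ) × ℝ |
          (∀ j, xy.1 j ∈ gridG p) ∧ xy.2 ∈ gridG 1 ∧
          |(∑ j : Fin M, w j.castSucc * xy.1 j) + w (Fin.last M) * xy.2| <
            Real.sqrt ((Real.log (2 / δ') / 2) * ∑ j : Fin (M + 1), (w j) ^ 2) }.ncard : ℝ) :=
  hoeffding_grid_count_general p M δ' hδ' w hw
end

section
/- Let m, d be positive integers, let c_1,…,c_m be positive reals with ‖c‖₁ := Σ_i c_i, let U_1,…,U_m be d×d complex matrices, and let V be an m×m complex matrix whose first column (the image of the first standard basis vector e_1) equals Σ_{i=1}^{m} √(c_i/‖c‖₁)·e_i. Define the md×md block-diagonal matrix W := Σ_{i=1}^{m} (e_i e_i*) ⊗ U_i (Kronecker product). Then (e_1* ⊗ I_d) · (V* ⊗ I_d) · W · (V ⊗ I_d) · (e_1 ⊗ I_d) = (1/‖c‖₁) · Σ_{i=1}^{m} c_i · U_i, i.e., the top-left d×d block of (V* ⊗ I_d) W (V ⊗ I_d) is the normalized linear combination ‖c‖₁^{−1} Σ_i c_i U_i. -/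
/-!
The SELECT matrix `W = Σ_i |i⟩⟨i| ⊗ U_i` is block diagonal with blocks `U_i`, so the `(a, b)`
block of `(V† ⊗ I) W (V ⊗ I)` is `Σ_i conj (V i a) V i b • U_i`. For `a = b = 0` the weights are
`|V i 0|² = c_i / ‖c‖₁`.
-/

open Matrix Kronecker

namespace Matrix

variable {ι n α : Type*} [Fintype ι] [DecidableEq ι]

theorem sum_single_kronecker_apply [Semiring α] (U : ι → Matrix n n α) (a b : ι) (j k : n) :
    (∑ i, single i i (1 : α) ⊗ₖ U i) (a, j) (b, k) = if a = b then U a j k else 0 := by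
  simp only [sum_apply, kroneckerMap_apply, single_apply, ite_mul, one_mul, zero_mul]
  split_ifs with hab
  · subst hab; simp
  · exact Finset.sum_eq_zero fun i _ => if_neg fun h => hab (h.1.symm.trans h.2)

theorem conjTranspose_kronecker_one_mul_sum_single_kronecker_mul_kronecker_one_apply
    [Fintype n] [DecidableEq n] [CommSemiring α] [StarRing α]
    (V : Matrix ι ι α) (U : ι → Matrix n n α) (a b : ι) (j k : n) :
    ((Vᴴ ⊗ₖ (1 : Matrix n n α)) * (∑ i, single i i 1 ⊗ₖ U i) * (V ⊗ₖ 1) :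
        Matrix (ι × n) (ι × n) α) (a, j) (b, k) =
      ∑ i, star (V i a) * U i j k * V i b := by
  simp only [mul_apply, Fintype.sum_prod_type, sum_single_kronecker_apply, kroneckerMap_apply,
    conjTranspose_apply, one_apply, mul_ite, ite_mul, mul_one, mul_zero, zero_mul,
    Finset.sum_ite_eq, Finset.sum_ite_eq', Finset.mem_univ, if_true]

end Matrix

theorem lcu_correctness_general (m d : ℕ) (hm : 0 < m)
    (c : Fin m → ℝ) (hc : ∀ i, 0 < c i)
    (U : Fin m → Matrix (Fin d) (Fin d) ℂ)
    (V : Matrix (Fin m) (Fin m) ℂ)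
    (hV : ∀ i, V i ⟨0, hm⟩ = ((Real.sqrt (c i / ∑ j, c j) : ℝ) : ℂ)) :
    ∀ j k : Fin d,
      (((Vᴴ ⊗ₖ (1 : Matrix (Fin d) (Fin d) ℂ)) *
          (∑ i, Matrix.single i i 1 ⊗ₖ U i) *
          (V ⊗ₖ (1 : Matrix (Fin d) (Fin d) ℂ)) :
            Matrix (Fin m × Fin d) (Fin m × Fin d) ℂ)) (⟨0, hm⟩, j) (⟨0, hm⟩, k) =
        ((((∑ i, c i)⁻¹ : ℝ) : ℂ)) * ∑ i, (c i : ℂ) * U i j k := by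
  intro j k
  have hsum : 0 < ∑ i, c i := Finset.sum_pos (fun i _ => hc i) ⟨⟨0, hm⟩, Finset.mem_univ _⟩
  rw [conjTranspose_kronecker_one_mul_sum_single_kronecker_mul_kronecker_one_apply, Finset.mul_sum]
  refine Finset.sum_congr rfl fun i _ => ?_
  have hweight : star (V i ⟨0, hm⟩) * V i ⟨0, hm⟩ = ((c i / ∑ j, c j : ℝ) : ℂ) := by
    rw [hV, Complex.star_def, Complex.conj_ofReal, ← Complex.ofReal_mul,
      Real.mul_self_sqrt (div_nonneg (hc i).le hsum.le)]
  rw [mul_right_comm, hweight]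
  push_cast
  ring

/-- Correctness of the linear combination of unitaries (LCU) method (Fig. 2):
if the first column of the PREPARE matrix `V` is `Σ_i √(c_i/‖c‖₁) e_i` and
`W = Σ_i |i⟩⟨i| ⊗ U_i` is the SELECT matrix, then the top-left `d × d` block of
`(V† ⊗ I_d) W (V ⊗ I_d)` equals `‖c‖₁⁻¹ Σ_i c_i U_i`. -/
theorem lcu_correctness (m d : ℕ) (hm : 0 < m) (hd : 0 < d)
    (c : Fin m → ℝ) (hc : ∀ i, 0 < c i)
    (U : Fin m → Matrix (Fin d) (Fin d) ℂ)
    (V : Matrix (Fin m) (Fin m) ℂ)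
    (hV : ∀ i, V i ⟨0, hm⟩ = ((Real.sqrt (c i / ∑ j, c j) : ℝ) : ℂ)) :
    ∀ j k : Fin d,
      (((Vᴴ ⊗ₖ (1 : Matrix (Fin d) (Fin d) ℂ)) *
          (∑ i, Matrix.single i i 1 ⊗ₖ U i) *
          (V ⊗ₖ (1 : Matrix (Fin d) (Fin d) ℂ)) :
            Matrix (Fin m × Fin d) (Fin m × Fin d) ℂ)) (⟨0, hm⟩, j) (⟨0, hm⟩, k) =
        ((((∑ i, c i)⁻¹ : ℝ) : ℂ)) * ∑ i, (c i : ℂ) * U i j k :=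
  lcu_correctness_general m d hm c hc U V hV
end

section
/- Let a, d be positive integers, let W be a unitary (a·d)×(a·d) complex matrix indexed by the product {1,…,a}×{1,…,d}, let U be a unitary d×d complex matrix, and let ε ∈ [0,1]. Suppose the top-left d×d block of W satisfies ‖(e_1* ⊗ I_d)·W·(e_1 ⊗ I_d) − U‖ ≤ ε in operator norm, where e_1 is the first standard basis vector of ℂ^a. Then for every unit vector ψ ∈ ℂ^d, ‖W(e_1 ⊗ ψ) − e_1 ⊗ (Uψ)‖ ≤ ε + √(2ε). -/
/-! Write `W(e₁ ⊗ ψ) = e₁ ⊗ Aψ + r`, where `A` is the top-left block of `W` and `r` vanishes on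
the first block, so is orthogonal to `e₁ ⊗ Aψ`. Since `W` is unitary, `‖Aψ‖² + ‖r‖² = 1`, while
`‖Aψ‖ ≥ ‖Uψ‖ - ε = 1 - ε`; together these give `‖r‖² ≤ 2ε`. The triangle inequality then bounds
the error by `‖Aψ - Uψ‖ + ‖r‖ ≤ ε + √(2ε)`. -/

open scoped InnerProductSpace

section

variable {𝕜 E : Type*} [RCLike 𝕜] [NormedAddCommGroup E] [InnerProductSpace 𝕜 E]

theorem norm_add_sub_le_add_sqrt_of_inner_eq_zero {x r u : E} {ε : ℝ} (hxr : ⟪x, r⟫_𝕜 = 0)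
    (hxr_norm : ‖x + r‖ = 1) (hu : ‖u‖ = 1) (hxu : ‖x - u‖ ≤ ε) :
    ‖x + r - u‖ ≤ ε + √(2 * ε) := by
  have hε : 0 ≤ ε := (norm_nonneg _).trans hxu
  have hx : 1 - ε ≤ ‖x‖ := by
    have := norm_sub_norm_le u x
    rw [hu, norm_sub_rev] at this
    linarith
  have hpyth := norm_add_sq_eq_norm_sq_add_norm_sq_of_inner_eq_zero x r hxr
  rw [hxr_norm] at hpyth
  have hr : ‖r‖ ≤ √(2 * ε) :=
    Real.le_sqrt_of_sq_le (by nlinarith [norm_nonneg x, norm_nonneg r])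
  calc ‖x + r - u‖ = ‖(x - u) + r‖ := by rw [add_sub_right_comm]
    _ ≤ ‖x - u‖ + ‖r‖ := norm_add_le _ _
    _ ≤ ε + √(2 * ε) := add_le_add hxu hr

end

namespace EuclideanSpace

variable {𝕜 ι κ : Type*} [RCLike 𝕜] [Fintype ι] [DecidableEq ι] [Fintype κ]

/-- The tensor product `eᵢ ⊗ v`. -/
def blockEmbed (i : ι) : EuclideanSpace 𝕜 κ →ₗᵢ[𝕜] EuclideanSpace 𝕜 (ι × κ) where
  toFun v := WithLp.toLp 2 fun pq => if pq.1 = i then v pq.2 else 0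
  map_add' v w := by ext ⟨p, q⟩; by_cases h : p = i <;> simp [h]
  map_smul' c v := by ext ⟨p, q⟩; by_cases h : p = i <;> simp [h]
  norm_map' v := by
    simp only [EuclideanSpace.norm_eq, LinearMap.coe_mk, AddHom.coe_mk, Fintype.sum_prod_type]
    simp [apply_ite (fun t : 𝕜 => ‖t‖ ^ 2), Finset.sum_ite_eq']

theorem blockEmbed_apply (i : ι) (v : EuclideanSpace 𝕜 κ) (pq : ι × κ) :
    blockEmbed i v pq = if pq.1 = i then v pq.2 else 0 := rfl

theorem inner_blockEmbed_eq_zero {i : ι} (v : EuclideanSpace 𝕜 κ)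
    {w : EuclideanSpace 𝕜 (ι × κ)} (hw : ∀ q, w (i, q) = 0) : ⟪blockEmbed i v, w⟫_𝕜 = 0 := by
  rw [PiLp.inner_apply, Fintype.sum_prod_type]
  refine Finset.sum_eq_zero fun p _ => Finset.sum_eq_zero fun q _ => ?_
  by_cases h : p = i
  · subst h; simp [hw]
  · simp [blockEmbed_apply, h]

theorem toEuclideanCLM_blockEmbed_apply_self [DecidableEq κ] (W : Matrix (ι × κ) (ι × κ) 𝕜)
    (i : ι) (v : EuclideanSpace 𝕜 κ) (q : κ) :
    Matrix.toEuclideanCLM (𝕜 := 𝕜) W (blockEmbed i v) (i, q) =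
      Matrix.toEuclideanCLM (𝕜 := 𝕜) (W.submatrix (Prod.mk i) (Prod.mk i)) v q := by
  simp [blockEmbed, Matrix.mulVec, dotProduct, Fintype.sum_prod_type, mul_ite]

end EuclideanSpace

open EuclideanSpace

theorem block_encoding_state_error_general (a d : ℕ) (ha : 0 < a)
    (W : Matrix (Fin a × Fin d) (Fin a × Fin d) ℂ)
    (hW : W ∈ Matrix.unitaryGroup (Fin a × Fin d) ℂ)
    (U : Matrix (Fin d) (Fin d) ℂ) (hU : U ∈ Matrix.unitaryGroup (Fin d) ℂ)
    (ε : ℝ)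
    (hblock :
      ‖Matrix.toEuclideanCLM (𝕜 := ℂ)
          (Matrix.of (fun j k : Fin d => W (⟨0, ha⟩, j) (⟨0, ha⟩, k)) - U)‖ ≤ ε)
    (ψ : EuclideanSpace ℂ (Fin d)) (hψ : ‖ψ‖ = 1) :
    ‖Matrix.toEuclideanCLM (𝕜 := ℂ) W
          ((WithLp.equiv 2 ((Fin a × Fin d) → ℂ)).symm
            (fun pq => if pq.1 = ⟨0, ha⟩ then ψ pq.2 else 0)) -
        (WithLp.equiv 2 ((Fin a × Fin d) → ℂ)).symm
          (fun pq => if pq.1 = ⟨0, ha⟩ then (Matrix.toEuclideanCLM (𝕜 := ℂ) U ψ) pq.2 else 0)‖ ≤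
      ε + Real.sqrt (2 * ε) := by
  set i : Fin a := ⟨0, ha⟩
  set A := W.submatrix (Prod.mk i) (Prod.mk i)
  set y := Matrix.toEuclideanCLM (𝕜 := ℂ) W (blockEmbed i ψ)
  set x := blockEmbed i (Matrix.toEuclideanCLM (𝕜 := ℂ) A ψ)
  set u := blockEmbed i (Matrix.toEuclideanCLM (𝕜 := ℂ) U ψ)
  change ‖y - u‖ ≤ ε + √(2 * ε)
  have hy : ‖x + (y - x)‖ = 1 := by
    rw [add_sub_cancel, ContinuousLinearMap.norm_map_of_mem_unitary
      (Unitary.map_mem Matrix.toEuclideanCLM hW), LinearIsometry.norm_map, hψ]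
  have hu : ‖u‖ = 1 := by
    rw [LinearIsometry.norm_map, ContinuousLinearMap.norm_map_of_mem_unitary
      (Unitary.map_mem Matrix.toEuclideanCLM hU), hψ]
  have hxu : ‖x - u‖ ≤ ε :=
    calc _ = ‖Matrix.toEuclideanCLM (𝕜 := ℂ) (A - U) ψ‖ := by
          rw [← map_sub, LinearIsometry.norm_map, map_sub]; rfl
      _ ≤ ‖Matrix.toEuclideanCLM (𝕜 := ℂ) (A - U)‖ * ‖ψ‖ := ContinuousLinearMap.le_opNorm _ _
      _ ≤ ε := by rwa [hψ, mul_one]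
  have hxr : ⟪x, y - x⟫_ℂ = 0 := inner_blockEmbed_eq_zero _ fun q => by
    simp [x, y, A, blockEmbed_apply, toEuclideanCLM_blockEmbed_apply_self]
  simpa only [add_sub_cancel] using norm_add_sub_le_add_sqrt_of_inner_eq_zero hxr hy hu hxu

/-- State-level error bound for block encodings of unitaries (used in Lemma 13):
if the top-left `d × d` block of a unitary `W` on `ℂ^a ⊗ ℂ^d` is `ε`-close in operator
norm to a unitary `U`, then for every unit vector `ψ`,
`‖W(e₁ ⊗ ψ) - e₁ ⊗ (Uψ)‖ ≤ ε + √(2ε)`. -/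
theorem block_encoding_state_error (a d : ℕ) (ha : 0 < a) (hd : 0 < d)
    (W : Matrix (Fin a × Fin d) (Fin a × Fin d) ℂ)
    (hW : W ∈ Matrix.unitaryGroup (Fin a × Fin d) ℂ)
    (U : Matrix (Fin d) (Fin d) ℂ) (hU : U ∈ Matrix.unitaryGroup (Fin d) ℂ)
    (ε : ℝ) (hε : ε ∈ Set.Icc (0 : ℝ) 1)
    (hblock :
      ‖Matrix.toEuclideanCLM (𝕜 := ℂ)
          (Matrix.of (fun j k : Fin d => W (⟨0, ha⟩, j) (⟨0, ha⟩, k)) - U)‖ ≤ ε)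
    (ψ : EuclideanSpace ℂ (Fin d)) (hψ : ‖ψ‖ = 1) :
    ‖Matrix.toEuclideanCLM (𝕜 := ℂ) W
          ((WithLp.equiv 2 ((Fin a × Fin d) → ℂ)).symm
            (fun pq => if pq.1 = ⟨0, ha⟩ then ψ pq.2 else 0)) -
        (WithLp.equiv 2 ((Fin a × Fin d) → ℂ)).symm
          (fun pq => if pq.1 = ⟨0, ha⟩ then (Matrix.toEuclideanCLM (𝕜 := ℂ) U ψ) pq.2 else 0)‖ ≤
      ε + Real.sqrt (2 * ε) :=
  block_encoding_state_error_general a d ha W hW U hU ε hblock ψ hψ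
end
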